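/- arXiv:0907.2908 — 2 statements merged into one kernel-verified Lean document; each statement's English description precedes it below -/
import Mathlib

section
/- For fixed 0 < z₋ < z₊ and 0 < α < 1, the integral G_n = ∫₀^{z₋} zⁿ (z₊ − z)^(−α)(z₋ − z)^(α−1) dz satisfies G_n ~ Γ(α) n^(−α) z₋^(α+n) (z₊ − z₋)^(−α) as n → ∞; that is, the ratio G_n · n^α z₋^(−α−n) (z₊ − z₋)^α / Γ(α) tends to 1. -/
/-!
Substituting `z = z₋ t` turns `G_n` into `z₋^(α+n) ∫₀¹ tⁿ g(t) (1 - t)^(α-1) dt` with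
`g(t) = (z₊ - z₋ t)^(-α)` continuous on `[0, 1]`. For `g = 1` this is the Beta integral
`n! / ∏_{j ≤ n} (α + j)`, and `n^α` times it tends to `Γ(α)` by Euler's limit formula. For
general `g`, subtract `g(1)`: near `t = 1` the difference is small, and away from `1` the factor
`tⁿ` decays geometrically, which beats `n^α`. Hence `n^α ∫₀¹ tⁿ g(t) (1 - t)^(α-1) dt → Γ(α) g(1)`.
-/

open Real Filter Topology MeasureTheory Set

noncomputable def watsonIntegral (α : ℝ) (g : ℝ → ℝ) (n : ℕ) : ℝ :=
  ∫ t in (0:ℝ)..1, t ^ n * g t * (1 - t) ^ (α - 1)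

section Watson

variable {α : ℝ}

lemma intervalIntegrable_one_sub_rpow_sub_one (hα : 0 < α) :
    IntervalIntegrable (fun t : ℝ => (1 - t) ^ (α - 1)) volume 0 1 := by
  simpa using ((intervalIntegral.intervalIntegrable_rpow' (r := α - 1) (by linarith)
    (a := 0) (b := 1)).comp_sub_left 1).symm

lemma integral_one_sub_rpow_sub_one (hα : 0 < α) :
    ∫ t in (0:ℝ)..1, (1 - t) ^ (α - 1) = 1 / α := by
  rw [intervalIntegral.integral_comp_sub_left (fun x : ℝ => x ^ (α - 1)), sub_self, sub_zero,
    intervalIntegral.integral_symm, integral_rpow (Or.inl (by linarith))]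
  simp [Real.zero_rpow hα.ne']
  ring

lemma intervalIntegrable_watsonIntegral (hα : 0 < α) {g : ℝ → ℝ} (hg : ContinuousOn g (Icc 0 1))
    (n : ℕ) : IntervalIntegrable (fun t : ℝ => t ^ n * g t * (1 - t) ^ (α - 1)) volume 0 1 :=
  (intervalIntegrable_one_sub_rpow_sub_one hα).continuousOn_mul
    ((continuousOn_pow n).mul (by rwa [uIcc_of_le zero_le_one]))

lemma watsonIntegral_one (hα : 0 < α) (n : ℕ) :
    watsonIntegral α 1 n = n.factorial / ∏ j ∈ Finset.range (n + 1), (α + j) := by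
  have hbeta : Complex.betaIntegral (n + 1) α = (watsonIntegral α 1 n : ℂ) := by
    rw [Complex.betaIntegral, watsonIntegral, ← intervalIntegral.integral_ofReal]
    refine intervalIntegral.integral_congr fun t ht => ?_
    rw [uIcc_of_le zero_le_one] at ht
    have h1t : (0:ℝ) ≤ 1 - t := by linarith [ht.2]
    simp only [add_sub_cancel_right, Complex.cpow_natCast, Pi.one_apply, mul_one]
    rw [show (1 - (t:ℂ)) = ((1 - t : ℝ) : ℂ) by push_cast; ring,
      show (α : ℂ) - 1 = ((α - 1 : ℝ) : ℂ) by push_cast; ring,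
      ← Complex.ofReal_cpow h1t]
    push_cast
    ring
  have h := hbeta.symm.trans ((Complex.betaIntegral_symm _ _).trans
    (Complex.betaIntegral_eval_nat_add_one_right (by simpa using hα) n))
  exact_mod_cast h

lemma tendsto_rpow_mul_watsonIntegral_one (hα : 0 < α) :
    Tendsto (fun n : ℕ => (n : ℝ) ^ α * watsonIntegral α 1 n) atTop (𝓝 (Gamma α)) :=
  (Real.GammaSeq_tendsto_Gamma α).congr fun n => by
    rw [Real.GammaSeq, mul_div_assoc, watsonIntegral_one hα]

lemma tendsto_rpow_mul_pow_of_lt_one (s : ℝ) {r : ℝ} (hr0 : 0 ≤ r) (hr1 : r < 1) :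
    Tendsto (fun n : ℕ => (n : ℝ) ^ s * r ^ n) atTop (𝓝 0) := by
  refine squeeze_zero' (Eventually.of_forall fun n => by positivity) ?_
    (tendsto_pow_const_mul_const_pow_of_lt_one ⌈s⌉₊ hr0 hr1)
  filter_upwards [eventually_ge_atTop 1] with n hn
  have hs : (n : ℝ) ^ s ≤ (n : ℝ) ^ ⌈s⌉₊ := by
    rw [← Real.rpow_natCast]
    exact Real.rpow_le_rpow_of_exponent_le (by exact_mod_cast hn) (Nat.le_ceil s)
  exact mul_le_mul_of_nonneg_right hs (pow_nonneg hr0 n)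

lemma abs_watsonIntegral_le (hα : 0 < α) {h : ℝ → ℝ} (hh : ContinuousOn h (Icc 0 1))
    {r ε M : ℝ} (hr : 0 ≤ r) (hε : 0 ≤ ε) (hnear : ∀ t ∈ Icc r 1, |h t| ≤ ε)
    (hM : ∀ t ∈ Icc (0:ℝ) 1, |h t| ≤ M) (n : ℕ) :
    |watsonIntegral α h n| ≤ ε * watsonIntegral α 1 n + M * r ^ n / α := by
  have hbound : ∀ t ∈ Icc (0:ℝ) 1, |t ^ n * h t * (1 - t) ^ (α - 1)|
      ≤ ε * (t ^ n * (1 : ℝ → ℝ) t * (1 - t) ^ (α - 1)) + M * r ^ n * (1 - t) ^ (α - 1) := by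
    intro t ht
    have hw : 0 ≤ (1 - t) ^ (α - 1) := Real.rpow_nonneg (by linarith [ht.2]) _
    have htn : 0 ≤ t ^ n := pow_nonneg ht.1 n
    have hM0 : 0 ≤ M := (abs_nonneg _).trans (hM t ht)
    rw [abs_mul, abs_mul, abs_of_nonneg htn, abs_of_nonneg hw, Pi.one_apply, mul_one]
    rcases le_or_gt r t with hrt | htr
    · have := mul_le_mul_of_nonneg_left (hnear t ⟨hrt, ht.2⟩) htn
      have : 0 ≤ M * r ^ n * (1 - t) ^ (α - 1) := by positivity
      nlinarith
    · have := mul_le_mul (pow_le_pow_left₀ ht.1 htr.le n) (hM t ht) (abs_nonneg _)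
        (pow_nonneg hr n)
      have : 0 ≤ ε * (t ^ n * (1 - t) ^ (α - 1)) := by positivity
      nlinarith
  have hw := intervalIntegrable_one_sub_rpow_sub_one hα
  have h1 := intervalIntegrable_watsonIntegral hα continuousOn_const n (g := 1)
  calc |watsonIntegral α h n|
      ≤ ∫ t in (0:ℝ)..1, |t ^ n * h t * (1 - t) ^ (α - 1)| :=
        intervalIntegral.abs_integral_le_integral_abs zero_le_one
    _ ≤ ∫ t in (0:ℝ)..1, (ε * (t ^ n * (1 : ℝ → ℝ) t * (1 - t) ^ (α - 1))
          + M * r ^ n * (1 - t) ^ (α - 1)) :=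
        intervalIntegral.integral_mono_on zero_le_one
          (intervalIntegrable_watsonIntegral hα hh n).abs
          ((h1.const_mul ε).add (hw.const_mul _)) hbound
    _ = ε * watsonIntegral α 1 n + M * r ^ n / α := by
        rw [intervalIntegral.integral_add (h1.const_mul ε) (hw.const_mul _),
          intervalIntegral.integral_const_mul, intervalIntegral.integral_const_mul,
          integral_one_sub_rpow_sub_one hα, watsonIntegral]
        ring

lemma tendsto_rpow_mul_watsonIntegral_of_eq_zero (hα : 0 < α) {h : ℝ → ℝ}
    (hh : ContinuousOn h (Icc 0 1)) (h1 : h 1 = 0) :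
    Tendsto (fun n : ℕ => (n : ℝ) ^ α * watsonIntegral α h n) atTop (𝓝 0) := by
  rw [Metric.tendsto_nhds]
  intro ε hε
  set η := ε / (Gamma α + 2)
  have hη : 0 < η := div_pos hε (by linarith [Real.Gamma_pos_of_pos hα])
  obtain ⟨M, hM⟩ := isCompact_Icc.exists_bound_of_continuousOn hh
  obtain ⟨δ, hδ, hcont⟩ :=
    Metric.continuousWithinAt_iff.mp (hh 1 ⟨zero_le_one, le_rfl⟩) η hη
  set r := max 0 (1 - δ / 2)
  have hr1 : r < 1 := max_lt one_pos (by linarith)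
  have hnear : ∀ t ∈ Icc r 1, |h t| ≤ η := fun t ht => by
    have hdist : dist t 1 < δ := by
      rw [Real.dist_eq, abs_of_nonpos (by linarith [ht.2])]
      linarith [le_max_right 0 (1 - δ / 2), ht.1]
    have := hcont ⟨(le_max_left _ _).trans ht.1, ht.2⟩ hdist
    rw [Real.dist_eq, h1, sub_zero] at this
    exact this.le
  have hB : ∀ᶠ n : ℕ in atTop, (n : ℝ) ^ α * watsonIntegral α 1 n < Gamma α + 1 :=
    (tendsto_rpow_mul_watsonIntegral_one hα).eventually_lt_const (lt_add_one _)
  have hfar : ∀ᶠ n : ℕ in atTop, M / α * ((n : ℝ) ^ α * r ^ n) < η := by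
    refine Tendsto.eventually_lt_const hη ?_
    simpa using (tendsto_rpow_mul_pow_of_lt_one α (le_max_left _ _) hr1).const_mul (M / α)
  filter_upwards [hB, hfar] with n hBn hfarn
  have hn : 0 ≤ (n : ℝ) ^ α := by positivity
  have hest := abs_watsonIntegral_le hα hh (le_max_left _ _) hη.le hnear
    (fun t ht => by simpa using hM t ht) n
  calc dist ((n : ℝ) ^ α * watsonIntegral α h n) 0
      = (n : ℝ) ^ α * |watsonIntegral α h n| := by
        rw [Real.dist_eq, sub_zero, abs_mul, abs_of_nonneg hn]
    _ ≤ (n : ℝ) ^ α * (η * watsonIntegral α 1 n + M * r ^ n / α) :=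
        mul_le_mul_of_nonneg_left hest hn
    _ = η * ((n : ℝ) ^ α * watsonIntegral α 1 n) + M / α * ((n : ℝ) ^ α * r ^ n) := by ring
    _ < η * (Gamma α + 1) + η := by gcongr
    _ = ε := by
        simp only [η]
        field_simp
        ring

lemma watsonIntegral_eq_add (hα : 0 < α) {g : ℝ → ℝ} (hg : ContinuousOn g (Icc 0 1)) (n : ℕ) :
    watsonIntegral α g n
      = g 1 * watsonIntegral α 1 n + watsonIntegral α (fun t => g t - g 1) n := by
  have hsub : ContinuousOn (fun t => g t - g 1) (Icc 0 1) := hg.sub continuousOn_const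
  rw [watsonIntegral, watsonIntegral, watsonIntegral, ← intervalIntegral.integral_const_mul,
    ← intervalIntegral.integral_add
      ((intervalIntegrable_watsonIntegral hα continuousOn_const n (g := 1)).const_mul _)
      (intervalIntegrable_watsonIntegral hα hsub n)]
  congr 1
  ext t
  simp only [Pi.one_apply]
  ring

theorem tendsto_rpow_mul_watsonIntegral (hα : 0 < α) {g : ℝ → ℝ}
    (hg : ContinuousOn g (Icc 0 1)) :
    Tendsto (fun n : ℕ => (n : ℝ) ^ α * watsonIntegral α g n) atTop (𝓝 (Gamma α * g 1)) := by
  have h := ((tendsto_rpow_mul_watsonIntegral_one hα).const_mul (g 1)).add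
    (tendsto_rpow_mul_watsonIntegral_of_eq_zero hα (h := fun t => g t - g 1)
      (hg.sub continuousOn_const) (sub_self _))
  rw [add_zero, mul_comm] at h
  refine h.congr fun n => ?_
  rw [watsonIntegral_eq_add hα hg n]
  ring

end Watson

lemma integral_pow_mul_mul_sub_rpow_eq_watsonIntegral {a : ℝ} (ha : 0 < a) (α : ℝ)
    (f : ℝ → ℝ) (n : ℕ) :
    ∫ z in (0:ℝ)..a, z ^ n * f z * (a - z) ^ (α - 1)
      = a ^ (α + n) * watsonIntegral α (fun t => f (a * t)) n := by
  have hscale := intervalIntegral.integral_comp_mul_left (a := 0) (b := 1)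
    (fun z : ℝ => z ^ n * f z * (a - z) ^ (α - 1)) ha.ne'
  rw [mul_zero, mul_one, smul_eq_mul] at hscale
  have hpoint : ∀ t ∈ uIcc (0:ℝ) 1, (a * t) ^ n * f (a * t) * (a - a * t) ^ (α - 1)
      = a ^ n * a ^ (α - 1) * (t ^ n * f (a * t) * (1 - t) ^ (α - 1)) := fun t ht => by
    rw [uIcc_of_le zero_le_one] at ht
    rw [← mul_one_sub, Real.mul_rpow ha.le (by linarith [ht.2]), mul_pow]
    ring
  have hpow : a ^ (α + n) = a * (a ^ n * a ^ (α - 1)) := by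
    rw [Real.rpow_add ha, Real.rpow_natCast, Real.rpow_sub_one ha.ne']
    field_simp
  rw [eq_inv_mul_iff_mul_eq₀ ha.ne', intervalIntegral.integral_congr hpoint,
    intervalIntegral.integral_const_mul] at hscale
  rw [← hscale, hpow, watsonIntegral]
  ring

theorem G_asymptotics_general (zm zp α : ℝ) (hzm : 0 < zm) (hzz : zm < zp)
    (hα0 : 0 < α) :
    Filter.Tendsto
      (fun n : ℕ =>
        (∫ z in (0:ℝ)..zm, z^n * (zp - z) ^ (-α) * (zm - z) ^ (α - 1))
          / (Real.Gamma α * (n:ℝ) ^ (-α) * zm ^ (α + (n:ℝ)) * (zp - zm) ^ (-α)))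
      Filter.atTop (nhds 1) := by
  have hg : ContinuousOn (fun t => (zp - zm * t) ^ (-α)) (Icc 0 1) :=
    ContinuousOn.rpow_const (by fun_prop) fun t ht => Or.inl (by nlinarith [ht.2])
  have hc : (zp - zm) ^ (-α) ≠ 0 := (Real.rpow_pos_of_pos (by linarith) _).ne'
  have hΓ : Gamma α ≠ 0 := (Real.Gamma_pos_of_pos hα0).ne'
  have hlim := (tendsto_rpow_mul_watsonIntegral hα0 hg).div_const (Gamma α * (zp - zm) ^ (-α))
  rw [mul_one, div_self (mul_ne_zero hΓ hc)] at hlim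
  refine hlim.congr' ((eventually_ge_atTop 1).mono fun n hn1 => ?_)
  have hn : (0:ℝ) < n := by exact_mod_cast hn1
  dsimp only
  rw [integral_pow_mul_mul_sub_rpow_eq_watsonIntegral hzm, Real.rpow_neg hn.le]
  field_simp [(Real.rpow_pos_of_pos hn α).ne']

/-- Watson's lemma asymptotics: G_n ~ Γ(α) n^(−α) z₋^(α+n) (z₊ − z₋)^(−α) as n → ∞,
for fixed 0 < z₋ < z₊ and 0 < α < 1. -/
theorem G_asymptotics (zm zp α : ℝ) (hzm : 0 < zm) (hzz : zm < zp)
    (hα0 : 0 < α) (hα1 : α < 1) :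
    Filter.Tendsto
      (fun n : ℕ =>
        (∫ z in (0:ℝ)..zm, z^n * (zp - z) ^ (-α) * (zm - z) ^ (α - 1))
          / (Real.Gamma α * (n:ℝ) ^ (-α) * zm ^ (α + (n:ℝ)) * (zp - zm) ^ (-α)))
      Filter.atTop (nhds 1) :=
  G_asymptotics_general zm zp α hzm hzz hα0
end

section
/- For fixed 0 < z₋ < z₊ and 0 < α < 1, the integral H_n = (sin(απ)/π) ∫_{z₋}^{z₊} ξⁿ (ξ − z₋)^(α−1) (z₊ − ξ)^(−α) dξ satisfies H_n ~ n^(α−1) z₊^(n+1−α) (z₊ − z₋)^(α−1) / Γ(α) as n → ∞. -/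
/-!
Write the integral as `∫_{z₋}^{z₊} ξⁿ h(ξ) w(ξ) dξ` with `h(ξ) = (ξ - z₋)^(α-1)` and
`w(ξ) = (z₊ - ξ)^(-α)`. The factor `ξⁿ` concentrates the mass at `z₊`, where `h` is continuous:
the contribution of `[0, r]`, `r < z₊`, is `O(rⁿ)`, while `Wₙ = ∫_0^{z₊} ξⁿ w(ξ) dξ` decays only
like `z₊ⁿ n^(α-1)`. Hence the integral is `h(z₊) Wₙ + o(Wₙ)`. Scaling `ξ = z₊ t` turns `Wₙ` into
`z₊^(n+1-α) B(n+1, 1-α)`, and Gauss's limit `n^s B(n+1, s) → Γ(s)` gives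
`Wₙ ~ Γ(1-α) z₊^(n+1-α) n^(α-1)`. The reflection formula `Γ(α) Γ(1-α) = π / sin(απ)` turns the
prefactor `sin(απ)/π · Γ(1-α)` into `1/Γ(α)`.
-/

open Real Filter MeasureTheory Set Topology Asymptotics

theorem intervalIntegrable_sub_rpow_mul_sub_rpow {a b p q : ℝ} (hab : a < b) (hp : -1 < p)
    (hq : -1 < q) : IntervalIntegrable (fun x => (x - a) ^ p * (b - x) ^ q) volume a b := by
  have hm : (a + b) / 2 ∈ Ioo a b := ⟨by linarith, by linarith⟩
  have hleft : IntervalIntegrable (fun x : ℝ => (x - a) ^ p) volume a ((a + b) / 2) := by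
    simpa using (intervalIntegral.intervalIntegrable_rpow' hp (a := 0)
      (b := (a + b) / 2 - a)).comp_sub_right a
  have hright : IntervalIntegrable (fun x : ℝ => (b - x) ^ q) volume ((a + b) / 2) b := by
    simpa using (intervalIntegral.intervalIntegrable_rpow' hq (a := b - (a + b) / 2)
      (b := 0)).comp_sub_left b
  refine (hleft.mul_continuousOn ?_).trans (hright.continuousOn_mul ?_)
  · refine ContinuousOn.rpow_const (by fun_prop) fun x hx => Or.inl ?_
    rw [uIcc_of_le hm.1.le] at hx
    exact (sub_pos.2 (hx.2.trans_lt hm.2)).ne'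
  · refine ContinuousOn.rpow_const (by fun_prop) fun x hx => Or.inl ?_
    rw [uIcc_of_le hm.2.le] at hx
    exact (sub_pos.2 (hm.1.trans_le hx.1)).ne'

theorem abs_integral_pow_mul_le {a r b : ℝ} {f : ℝ → ℝ} (ha : 0 ≤ a) (har : a ≤ r) (hrb : r ≤ b)
    (hf : IntervalIntegrable f volume a b) (n : ℕ) :
    |∫ x in a..r, x ^ n * f x| ≤ r ^ n * ∫ x in a..b, |f x| := by
  have hfr : IntervalIntegrable f volume a r := hf.mono_set <| by
    rw [uIcc_of_le har, uIcc_of_le (har.trans hrb)]; exact Icc_subset_Icc_right hrb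
  calc |∫ x in a..r, x ^ n * f x|
      ≤ ∫ x in a..r, r ^ n * |f x| := by
        rw [← Real.norm_eq_abs]
        refine intervalIntegral.norm_integral_le_of_norm_le har
          (Eventually.of_forall fun x hx => ?_) (hfr.abs.const_mul _)
        rw [norm_mul, norm_pow, norm_of_nonneg (ha.trans hx.1.le), Real.norm_eq_abs]
        exact mul_le_mul_of_nonneg_right (pow_le_pow_left₀ (ha.trans hx.1.le) hx.2 n)
          (abs_nonneg _)
    _ ≤ r ^ n * ∫ x in a..b, |f x| := by
        rw [intervalIntegral.integral_const_mul]
        exact mul_le_mul_of_nonneg_left (intervalIntegral.integral_mono_interval le_rfl har hrb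
          (Eventually.of_forall fun x => abs_nonneg _) hf.abs) (pow_nonneg (ha.trans har) n)

theorem integral_sub_mul_integral_eq {a r b c : ℝ} {F G : ℝ → ℝ}
    (hF : IntervalIntegrable F volume a b) (hG : IntervalIntegrable G volume 0 b)
    (hra : r ∈ uIcc a b) (hr0 : r ∈ uIcc 0 b) :
    (∫ x in a..b, F x) - c * ∫ x in 0..b, G x
      = (∫ x in a..r, F x) + (∫ x in r..b, (F x - c * G x)) - c * ∫ x in 0..r, G x := by
  rw [intervalIntegral.integral_sub (hF.mono_set (uIcc_subset_uIcc_right hra))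
      ((hG.mono_set (uIcc_subset_uIcc_right hr0)).const_mul c),
    intervalIntegral.integral_const_mul,
    ← intervalIntegral.integral_add_adjacent_intervals
      (hF.mono_set (uIcc_subset_uIcc_left hra)) (hF.mono_set (uIcc_subset_uIcc_right hra)),
    ← intervalIntegral.integral_add_adjacent_intervals
      (hG.mono_set (uIcc_subset_uIcc_left hr0)) (hG.mono_set (uIcc_subset_uIcc_right hr0))]
  ring

theorem abs_integral_sub_mul_le {r b c δ : ℝ} {f g : ℝ → ℝ} (hrb : r ≤ b)
    (hg : ∀ x ∈ Ioc r b, 0 ≤ g x) (hg_int : IntervalIntegrable g volume r b)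
    (hf : ∀ x ∈ Ioc r b, |f x - c| ≤ δ) :
    |∫ x in r..b, (f x - c) * g x| ≤ δ * ∫ x in r..b, g x := by
  rw [← Real.norm_eq_abs, ← intervalIntegral.integral_const_mul]
  refine intervalIntegral.norm_integral_le_of_norm_le hrb
    (Eventually.of_forall fun x hx => ?_) (hg_int.const_mul δ)
  rw [norm_mul, Real.norm_eq_abs, norm_of_nonneg (hg x hx)]
  exact mul_le_mul_of_nonneg_right (hf x hx) (hg x hx)

theorem abs_integral_pow_mul_sub_le {a r b δ : ℝ} {h w : ℝ → ℝ} (ha : 0 ≤ a) (har : a ≤ r)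
    (hrb : r < b) (hw : ∀ x ∈ Icc 0 b, 0 ≤ w x) (hw_int : IntervalIntegrable w volume 0 b)
    (hhw_int : IntervalIntegrable (fun x => h x * w x) volume a b)
    (hclose : ∀ x ∈ Ioc r b, |h x - h b| ≤ δ) (n : ℕ) :
    |(∫ x in a..b, x ^ n * h x * w x) - h b * ∫ x in 0..b, x ^ n * w x|
      ≤ r ^ n * ((∫ x in a..b, |h x * w x|) + |h b| * ∫ x in 0..b, |w x|)
        + δ * ∫ x in 0..b, x ^ n * w x := by
  have hr : 0 ≤ r := ha.trans har
  have hwn : IntervalIntegrable (fun x => x ^ n * w x) volume 0 b :=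
    hw_int.continuousOn_mul (continuous_pow n).continuousOn
  have hhwn : IntervalIntegrable (fun x => x ^ n * h x * w x) volume a b := by
    simpa only [mul_assoc] using hhw_int.continuousOn_mul (continuous_pow n).continuousOn
  have hwn_nonneg : ∀ x ∈ Icc 0 b, 0 ≤ x ^ n * w x := fun x hx =>
    mul_nonneg (pow_nonneg hx.1 n) (hw x hx)
  have hnear : |∫ x in r..b, (x ^ n * h x * w x - h b * (x ^ n * w x))|
      ≤ δ * ∫ x in 0..b, x ^ n * w x := by
    calc _ = |∫ x in r..b, (h x - h b) * (x ^ n * w x)| := by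
          congr 1
          exact intervalIntegral.integral_congr fun x _ => by ring
      _ ≤ δ * ∫ x in r..b, x ^ n * w x :=
          abs_integral_sub_mul_le hrb.le (fun x hx => hwn_nonneg x ⟨hr.trans hx.1.le, hx.2⟩)
            (hwn.mono_set (uIcc_subset_uIcc_right (mem_uIcc_of_le hr hrb.le))) hclose
      _ ≤ δ * ∫ x in 0..b, x ^ n * w x :=
          mul_le_mul_of_nonneg_left (intervalIntegral.integral_mono_interval hr hrb.le le_rfl
            ((ae_restrict_iff' measurableSet_Ioc).2 (Eventually.of_forall fun x hx =>
              hwn_nonneg x (Ioc_subset_Icc_self hx))) hwn)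
            ((abs_nonneg _).trans (hclose b ⟨hrb, le_rfl⟩))
  have hfar₁ : |∫ x in a..r, x ^ n * h x * w x| ≤ r ^ n * ∫ x in a..b, |h x * w x| := by
    simpa only [mul_assoc] using abs_integral_pow_mul_le ha har hrb.le hhw_int n
  have hfar₂ := mul_le_mul_of_nonneg_left (abs_integral_pow_mul_le le_rfl hr hrb.le hw_int n)
    (abs_nonneg (h b))
  rw [integral_sub_mul_integral_eq hhwn hwn (mem_uIcc_of_le har hrb.le)
    (mem_uIcc_of_le hr hrb.le)]
  calc _ ≤ |∫ x in a..r, x ^ n * h x * w x|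
        + |∫ x in r..b, (x ^ n * h x * w x - h b * (x ^ n * w x))|
        + |h b| * |∫ x in 0..r, x ^ n * w x| := by
        rw [← abs_mul]; exact (abs_sub _ _).trans (by gcongr; exact abs_add_le _ _)
    _ ≤ _ := by linarith

theorem isLittleO_integral_pow_mul_sub_of_continuousWithinAt {a b : ℝ} {h w : ℝ → ℝ}
    (ha : 0 ≤ a) (hab : a < b) (hw : ∀ x ∈ Icc 0 b, 0 ≤ w x)
    (hw_int : IntervalIntegrable w volume 0 b)
    (hhw_int : IntervalIntegrable (fun x => h x * w x) volume a b)
    (hh : ContinuousWithinAt h (Iic b) b)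
    (hW : ∀ r ∈ Ico 0 b, (fun n : ℕ => r ^ n) =o[atTop] fun n => ∫ x in 0..b, x ^ n * w x) :
    (fun n : ℕ => (∫ x in a..b, x ^ n * h x * w x) - h b * ∫ x in 0..b, x ^ n * w x)
      =o[atTop] fun n => ∫ x in 0..b, x ^ n * w x := by
  refine IsLittleO.of_bound fun ε hε => ?_
  obtain ⟨r₀, hr₀b, hr₀⟩ := mem_nhdsLE_iff_exists_Icc_subset.1
    (hh (Metric.closedBall_mem_nhds (h b) (half_pos hε)))
  have har : a ≤ max r₀ a := le_max_right _ _
  have hrb : max r₀ a < b := max_lt hr₀b hab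
  have hclose : ∀ x ∈ Ioc (max r₀ a) b, |h x - h b| ≤ ε / 2 := fun x hx =>
    hr₀ ⟨(le_max_left _ _).trans hx.1.le, hx.2⟩
  filter_upwards [((hW _ ⟨ha.trans har, hrb⟩).const_mul_left
    ((∫ x in a..b, |h x * w x|) + |h b| * ∫ x in 0..b, |w x|)).bound (half_pos hε)] with n hn
  have hW0 : 0 ≤ ∫ x in 0..b, x ^ n * w x := intervalIntegral.integral_nonneg (ha.trans hab.le)
    fun x hx => mul_nonneg (pow_nonneg hx.1 n) (hw x hx)
  rw [norm_of_nonneg hW0] at hn ⊢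
  have := abs_integral_pow_mul_sub_le ha har hrb hw hw_int hhw_int hclose n
  rw [Real.norm_eq_abs]
  linarith [(Real.le_norm_self _).trans hn]

theorem tendsto_rpow_mul_integral_pow_mul_one_sub_rpow {s : ℝ} (hs : 0 < s) :
    Tendsto (fun n : ℕ => (n : ℝ) ^ s * ∫ t in (0:ℝ)..1, t ^ n * (1 - t) ^ (s - 1))
      atTop (𝓝 (Gamma s)) := by
  have hbeta (n : ℕ) : Complex.betaIntegral (n + 1) s
      = ((∫ t in (0:ℝ)..1, t ^ n * (1 - t) ^ (s - 1) : ℝ) : ℂ) := by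
    rw [Complex.betaIntegral, ← intervalIntegral.integral_ofReal]
    refine intervalIntegral.integral_congr fun t ht => ?_
    rw [uIcc_of_le zero_le_one] at ht
    simp only [add_sub_cancel_right, Complex.cpow_natCast, Complex.ofReal_mul,
      Complex.ofReal_pow, Complex.ofReal_cpow (sub_nonneg.2 ht.2), Complex.ofReal_sub,
      Complex.ofReal_one]
  rw [← tendsto_ofReal_iff, ← Complex.Gamma_ofReal]
  refine (Complex.GammaSeq_tendsto_Gamma s).congr fun n => ?_
  rw [Complex.GammaSeq_eq_betaIntegral_of_re_pos (by simpa using hs), ← Complex.betaIntegral_symm,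
    hbeta, Complex.ofReal_mul, Complex.ofReal_cpow n.cast_nonneg, Complex.ofReal_natCast]

theorem integral_pow_mul_sub_rpow_eq {b : ℝ} (hb : 0 < b) (s : ℝ) (n : ℕ) :
    ∫ x in (0:ℝ)..b, x ^ n * (b - x) ^ (s - 1)
      = b ^ ((n : ℝ) + s) * ∫ t in (0:ℝ)..1, t ^ n * (1 - t) ^ (s - 1) := by
  have hscale := intervalIntegral.smul_integral_comp_mul_left
    (fun x : ℝ => x ^ n * (b - x) ^ (s - 1)) (a := 0) (b := 1) b
  simp only [mul_zero, mul_one, smul_eq_mul] at hscale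
  rw [← hscale, ← intervalIntegral.integral_const_mul, ← intervalIntegral.integral_const_mul]
  refine intervalIntegral.integral_congr fun t ht => ?_
  rw [uIcc_of_le zero_le_one] at ht
  rw [show b - b * t = b * (1 - t) by ring, mul_rpow hb.le (sub_nonneg.2 ht.2),
    rpow_add hb, rpow_natCast, rpow_sub_one hb.ne']
  field_simp
  ring

theorem isEquivalent_integral_pow_mul_sub_rpow {b s : ℝ} (hb : 0 < b) (hs : 0 < s) :
    (fun n : ℕ => ∫ x in (0:ℝ)..b, x ^ n * (b - x) ^ (s - 1))
      ~[atTop] fun n => Gamma s * b ^ ((n : ℝ) + s) * (n : ℝ) ^ (-s) := by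
  have hB := (isEquivalent_const_iff_tendsto (Gamma_pos_of_pos hs).ne').2
    (tendsto_rpow_mul_integral_pow_mul_one_sub_rpow hs)
  refine (((IsEquivalent.refl (u := fun n : ℕ => b ^ ((n : ℝ) + s) * (n : ℝ) ^ (-s))).mul
    hB).congr_left ?_).congr_right ?_
  · filter_upwards [eventually_ge_atTop 1] with n hn
    have hn0 : (0 : ℝ) < n := by exact_mod_cast hn
    simp only [Pi.mul_apply, integral_pow_mul_sub_rpow_eq hb, rpow_neg hn0.le]
    field_simp
  · exact Eventually.of_forall fun n => by simp only [Pi.mul_apply, Function.const_apply]; ring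

theorem isLittleO_pow_rpow_neg_mul_pow {r b : ℝ} (s : ℝ) (hr : 0 ≤ r) (hrb : r < b) :
    (fun n : ℕ => r ^ n) =o[atTop] fun n => (n : ℝ) ^ (-s) * b ^ n := by
  obtain ⟨ρ, hrρ, hρb⟩ := exists_between hrb
  have hρ : 0 < ρ := hr.trans_lt hrρ
  have hpoly : (fun n : ℕ => (n : ℝ) ^ s) =o[atTop] fun n => (b / ρ) ^ n := by
    refine ((isLittleO_rpow_exp_pos_mul_atTop s (log_pos ((one_lt_div hρ).2 hρb))).comp_tendsto
      tendsto_natCast_atTop_atTop).congr_right fun n => ?_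
    rw [Function.comp_apply, mul_comm, exp_nat_mul, exp_log (div_pos (hρ.trans hρb) hρ)]
  have hρpow : (fun n : ℕ => (n : ℝ) ^ (-s) * ((n : ℝ) ^ s * ρ ^ n))
      =o[atTop] fun n => (n : ℝ) ^ (-s) * b ^ n :=
    (isBigO_refl _ _).mul_isLittleO <|
      (hpoly.mul_isBigO (isBigO_refl (fun n : ℕ => ρ ^ n) _)).congr_right
        fun n => by rw [← mul_pow, div_mul_cancel₀ _ hρ.ne']
  refine IsBigO.trans_isLittleO ?_ hρpow
  refine IsBigO.of_bound 1 ?_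
  filter_upwards [eventually_ge_atTop 1] with n hn
  have hn0 : (0 : ℝ) < n := by exact_mod_cast hn
  rw [← mul_assoc, ← rpow_add hn0, neg_add_cancel, rpow_zero, one_mul, one_mul,
    norm_of_nonneg (pow_nonneg hr n), norm_of_nonneg (pow_nonneg hρ.le n)]
  exact pow_le_pow_left₀ hr hrρ.le n

theorem isLittleO_pow_integral_pow_mul_sub_rpow {r b s : ℝ} (hr : 0 ≤ r) (hrb : r < b)
    (hs : 0 < s) :
    (fun n : ℕ => r ^ n) =o[atTop] fun n => ∫ x in (0:ℝ)..b, x ^ n * (b - x) ^ (s - 1) := by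
  have hb : 0 < b := hr.trans_lt hrb
  refine (isLittleO_pow_rpow_neg_mul_pow s hr hrb).trans_isBigO <|
    ((isBigO_self_const_mul (mul_pos (Gamma_pos_of_pos hs) (rpow_pos_of_pos hb s)).ne' _ _
      ).congr_right fun n => ?_).trans (isEquivalent_integral_pow_mul_sub_rpow hb hs).symm.isBigO
  rw [rpow_add hb, rpow_natCast]
  ring

theorem sin_mul_pi_div_pi_mul_Gamma_one_sub {s : ℝ} (hs0 : 0 < s) (hs1 : s < 1) :
    sin (s * π) / π * Gamma (1 - s) = (Gamma s)⁻¹ := by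
  have hsin : sin (s * π) ≠ 0 :=
    (sin_pos_of_pos_of_lt_pi (by positivity) (by nlinarith [pi_pos])).ne'
  have hΓ := (Gamma_pos_of_pos hs0).ne'
  have hreflect := Gamma_mul_Gamma_one_sub s
  rw [mul_comm π s, eq_div_iff hsin] at hreflect
  field_simp
  linear_combination hreflect

/-- Laplace-type asymptotics: H_n ~ n^(α−1) z₊^(n+1−α) (z₊ − z₋)^(α−1)/Γ(α) as n → ∞,
for fixed 0 < z₋ < z₊ and 0 < α < 1. -/
theorem H_asymptotics (zm zp α : ℝ) (hzm : 0 < zm) (hzz : zm < zp)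
    (hα0 : 0 < α) (hα1 : α < 1) :
    Filter.Tendsto
      (fun n : ℕ =>
        ((Real.sin (α * π) / π) * ∫ ξ in zm..zp, ξ^n * (ξ - zm) ^ (α - 1) * (zp - ξ) ^ (-α))
          / ((n:ℝ) ^ (α - 1) * zp ^ ((n:ℝ) + 1 - α) * (zp - zm) ^ (α - 1) / Real.Gamma α))
      Filter.atTop (nhds 1) := by
  have hzp : 0 < zp := hzm.trans hzz
  have hs : 0 < 1 - α := sub_pos.2 hα1
  have hc : (zp - zm) ^ (α - 1) ≠ 0 := (rpow_pos_of_pos (sub_pos.2 hzz) _).ne'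
  have hw_int : IntervalIntegrable (fun ξ => (zp - ξ) ^ (1 - α - 1)) volume 0 zp := by
    simpa using (intervalIntegral.intervalIntegrable_rpow' (by linarith : -1 < 1 - α - 1)
      (a := zp) (b := 0)).comp_sub_left zp
  have hloc := isLittleO_integral_pow_mul_sub_of_continuousWithinAt
    (h := fun ξ => (ξ - zm) ^ (α - 1)) hzm.le hzz
    (fun ξ hξ => rpow_nonneg (sub_nonneg.2 hξ.2) _) hw_int
    (intervalIntegrable_sub_rpow_mul_sub_rpow hzz (by linarith) (by linarith))
    ((continuousAt_id.sub continuousAt_const).rpow_const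
      (Or.inl (sub_pos.2 hzz).ne')).continuousWithinAt
    fun r hr => isLittleO_pow_integral_pow_mul_sub_rpow hr.1 hr.2 hs
  have hI := IsEquivalent.trans (hloc.trans_isBigO (isBigO_self_const_mul hc _ _))
    ((IsEquivalent.refl (u := fun _ => (zp - zm) ^ (α - 1))).smul
      (isEquivalent_integral_pow_mul_sub_rpow hzp hs))
  have hH := (IsEquivalent.refl (u := fun _ => sin (α * π) / π)).smul hI
  simp only [sub_sub_cancel_left, neg_sub, ← add_sub_assoc, smul_eq_mul] at hH
  refine (isEquivalent_iff_tendsto_one ?_).1 (hH.congr_right ?_)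
  · filter_upwards [eventually_gt_atTop 0] with n hn
    have hn' : (0 : ℝ) < n := Nat.cast_pos.2 hn
    have := Gamma_pos_of_pos hα0
    positivity
  · refine Eventually.of_forall fun n => ?_
    simp only [div_eq_mul_inv _ (Gamma α), ← sin_mul_pi_div_pi_mul_Gamma_one_sub hα0 hα1]
    ring
end
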